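/- Let H be a real Hilbert space, V : H → H monotone, y* ∈ H with V(y*) = 0, and let μ, γ, m, λ, η, ε be real numbers with μ > 0, ε = λ − η > 0, γ − m ≥ 0, η ≥ 0, and suppose the quadratic-form condition (−2εμ + λμ − 2γ + m)² − 3ε·(4/3)μ(γ − m) ≤ 0 holds. Then for all y, x, h ∈ H with ⟨x, h⟩ ≥ 0: 4η(m − γ)⟨y − y*, V(y)⟩ − 4ε‖x‖² − 2μ⟨x, h⟩ + 2(−2εμ + λμ − 2γ + m)⟨x, V(y)⟩ + 2μ(m − γ)‖V(y)‖² ≤ 4η(m − γ)⟨y − y*, V(y)⟩ − ε‖x‖² + (2/3)μ(m − γ)‖V(y)‖² ≤ 0. -/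

import Mathlib

/-! With `B = -2εμ + λμ - 2γ + m` and `B² ≤ 3ε · (4/3)μ(γ - m)`, the cross term `2B⟪x, V y⟫` is absorbed by
`3ε‖x‖² + (4/3)μ(γ - m)‖V y‖²`; every remaining term has a sign, by `⟪x, h⟫ ≥ 0`, `γ ≥ m`, and
monotonicity of `V` against its zero `y*`. -/

open RealInnerProductSpace

section

variable {E : Type*} [NormedAddCommGroup E] [InnerProductSpace ℝ E]

theorem two_mul_inner_le_of_sq_le_mul {a b c : ℝ} (ha : 0 < a) (hb : b ^ 2 ≤ a * c) (x v : E) :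
    2 * b * ⟪x, v⟫ ≤ a * ‖x‖ ^ 2 + c * ‖v‖ ^ 2 := by
  -- `a (a‖x‖² - 2b⟪x, v⟫ + c‖v‖²) = ‖a • x - b • v‖² + (ac - b²)‖v‖²`
  have hsq : 0 ≤ ‖a • x - b • v‖ ^ 2 := sq_nonneg _
  rw [norm_sub_sq_real, norm_smul, norm_smul, inner_smul_left, inner_smul_right, mul_pow,
    mul_pow, Real.norm_eq_abs, Real.norm_eq_abs, sq_abs, sq_abs] at hsq
  have hrest : 0 ≤ (a * c - b ^ 2) * ‖v‖ ^ 2 := mul_nonneg (by linarith) (sq_nonneg _)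
  simp only [RCLike.conj_to_real] at hsq
  refine le_of_mul_le_mul_left ?_ ha
  nlinarith

theorem inner_sub_apply_nonneg_of_apply_eq_zero {V : E → E}
    (hmono : ∀ a b : E, 0 ≤ ⟪V a - V b, a - b⟫) {y₀ : E} (hzero : V y₀ = 0) (y : E) :
    0 ≤ ⟪y - y₀, V y⟫ := by
  simpa [hzero, real_inner_comm] using hmono y y₀

end

theorem operator_drift_nonpositive_general
    {H : Type*} [NormedAddCommGroup H] [InnerProductSpace ℝ H]
    (V : H → H)
    (hmono : ∀ a b : H, (0:ℝ) ≤ inner ℝ (V a - V b) (a - b))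
    (ystar : H) (hzero : V ystar = 0)
    (μ γ m lam η ε : ℝ) (hμ : 0 < μ) (hεpos : 0 < ε)
    (hγm : 0 ≤ γ - m) (hη : 0 ≤ η)
    (hquad : ((-2) * ε * μ + lam * μ - 2 * γ + m) ^ 2
        - 3 * ε * ((4 / 3) * μ * (γ - m)) ≤ 0) :
    ∀ y x h : H, (0:ℝ) ≤ inner ℝ x h →
      (4 * η * (m - γ) * inner ℝ (y - ystar) (V y) - 4 * ε * ‖x‖ ^ 2
          - 2 * μ * inner ℝ x h
          + 2 * ((-2) * ε * μ + lam * μ - 2 * γ + m) * inner ℝ x (V y)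
          + 2 * μ * (m - γ) * ‖V y‖ ^ 2
        ≤ 4 * η * (m - γ) * inner ℝ (y - ystar) (V y) - ε * ‖x‖ ^ 2
          + (2 / 3) * μ * (m - γ) * ‖V y‖ ^ 2) ∧
      (4 * η * (m - γ) * inner ℝ (y - ystar) (V y) - ε * ‖x‖ ^ 2
          + (2 / 3) * μ * (m - γ) * ‖V y‖ ^ 2 ≤ 0) := by
  intro y x h hxh
  have hcross := two_mul_inner_le_of_sq_le_mul (by positivity : 0 < 3 * ε)
    (sub_nonpos.mp hquad) x (V y)
  have hdrift : 0 ≤ μ * ⟪x, h⟫ := mul_nonneg hμ.le hxh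
  have hmonoy : 0 ≤ η * (γ - m) * ⟪y - ystar, V y⟫ :=
    mul_nonneg (mul_nonneg hη hγm) (inner_sub_apply_nonneg_of_apply_eq_zero hmono hzero y)
  have hx : 0 ≤ ε * ‖x‖ ^ 2 := by positivity
  have hv : 0 ≤ μ * (γ - m) * ‖V y‖ ^ 2 := by positivity
  constructor <;> linarith

theorem operator_drift_nonpositive
    {H : Type*} [NormedAddCommGroup H] [InnerProductSpace ℝ H]
    (V : H → H)
    (hmono : ∀ a b : H, (0:ℝ) ≤ inner ℝ (V a - V b) (a - b))
    (ystar : H) (hzero : V ystar = 0)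
    (μ γ m lam η ε : ℝ) (hμ : 0 < μ) (hε : ε = lam - η) (hεpos : 0 < ε)
    (hγm : 0 ≤ γ - m) (hη : 0 ≤ η)
    (hquad : ((-2) * ε * μ + lam * μ - 2 * γ + m) ^ 2
        - 3 * ε * ((4 / 3) * μ * (γ - m)) ≤ 0) :
    ∀ y x h : H, (0:ℝ) ≤ inner ℝ x h →
      (4 * η * (m - γ) * inner ℝ (y - ystar) (V y) - 4 * ε * ‖x‖ ^ 2
          - 2 * μ * inner ℝ x h
          + 2 * ((-2) * ε * μ + lam * μ - 2 * γ + m) * inner ℝ x (V y)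
          + 2 * μ * (m - γ) * ‖V y‖ ^ 2
        ≤ 4 * η * (m - γ) * inner ℝ (y - ystar) (V y) - ε * ‖x‖ ^ 2
          + (2 / 3) * μ * (m - γ) * ‖V y‖ ^ 2) ∧
      (4 * η * (m - γ) * inner ℝ (y - ystar) (V y) - ε * ‖x‖ ^ 2
          + (2 / 3) * μ * (m - γ) * ‖V y‖ ^ 2 ≤ 0) :=
  operator_drift_nonpositive_general V hmono ystar hzero μ γ m lam η ε hμ hεpos hγm hη hquad
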